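/- Confluence of terminal well-founded inductions: Let P be a logic program over a finite type of atoms. Then any two terminal well-founded inductions of P have the same limit, i.e., if ν⁰,…,ν^m and μ⁰,…,μ^k are terminal well-founded inductions of P, then ν^m = μ^k. -/

import Mathlib

/-!
Every step of a well-founded induction increases precision and preserves the invariant that a
rule with a false head has a false body. Hence the limit `V` of a terminal induction absorbs
both kinds of step: a rule whose body is true in `V` already has a true head, and a set `U`
unfounded relative to `V` is already false in `V` (all stages stay below `V[U:f]`, so `U` has
no true atom, and otherwise making its unknown atoms false would be a strict step). By
induction, every stage of any other induction lies below `V` in the precision order, and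
antisymmetry of that order gives equality of two terminal limits.
-/

noncomputable section
open scoped Classical

namespace CP

/-- The three truth values. -/
inductive TV where
  | f | u | t
deriving DecidableEq

namespace TV

/-- Rank of a truth value in the truth order `f ≤_t u ≤_t t`. -/
def rank : TV → ℕ
  | f => 0
  | u => 1
  | t => 2

/-- Minimum in the truth order. -/
def tmin (a b : TV) : TV := if rank a ≤ rank b then a else b

/-- Maximum in the truth order. -/
def tmax (a b : TV) : TV := if rank a ≤ rank b then b else a

/-- Kleene negation. -/
def tneg : TV → TV
  | f => t
  | u => u
  | t => f

/-- The precision order on truth values: `u ≤_p f` and `u ≤_p t` (and reflexivity). -/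
def lep (a b : TV) : Prop := a = u ∨ a = b

end TV

/-- Pointwise precision order on three-valued interpretations. -/
def leP {A : Type} (ν ν' : A → TV) : Prop := ∀ a, TV.lep (ν a) (ν' a)

/-- Propositional formulas over a type `A` of atoms. -/
inductive Form (A : Type) where
  | atom : A → Form A
  | conj : Form A → Form A → Form A
  | disj : Form A → Form A → Form A
  | neg  : Form A → Form A

namespace Form

variable {A : Type}

/-- Two-valued satisfaction of a formula in an interpretation (a set of atoms). -/
def sat (I : Set A) : Form A → Prop
  | .atom a => a ∈ I
  | .conj φ ψ => sat I φ ∧ sat I ψ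
  | .disj φ ψ => sat I φ ∨ sat I ψ
  | .neg φ => ¬ sat I φ

/-- Kleene three-valued valuation of a formula. -/
def val (ν : A → TV) : Form A → TV
  | .atom a => ν a
  | .conj φ ψ => TV.tmin (val ν φ) (val ν ψ)
  | .disj φ ψ => TV.tmax (val ν φ) (val ν ψ)
  | .neg φ => TV.tneg (val ν φ)

/-- A formula is positive if it contains no negation. -/
def Positive : Form A → Prop
  | .atom _ => True
  | .conj φ ψ => Positive φ ∧ Positive ψ
  | .disj φ ψ => Positive φ ∧ Positive ψ
  | .neg _ => False

/-- The set of atoms occurring in a formula. -/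
def atoms : Form A → Set A
  | .atom a => {a}
  | .conj φ ψ => atoms φ ∪ atoms ψ
  | .disj φ ψ => atoms φ ∪ atoms ψ
  | .neg φ => atoms φ

/-- Atoms occurring under a number of negations of parity `b` (`true` = odd). -/
def atomsPar : Bool → Form A → Set A
  | b, .atom a => if b then ∅ else {a}
  | b, .conj φ ψ => atomsPar b φ ∪ atomsPar b ψ
  | b, .disj φ ψ => atomsPar b φ ∪ atomsPar b ψ
  | b, .neg φ => atomsPar (!b) φ

/-- Atoms occurring within the scope of an odd number of negations. -/
def natoms (φ : Form A) : Set A := atomsPar true φ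

end Form

/-- A CP-law: a nonempty head list of distinct atoms with probabilities in `(0,1]`
summing to at most `1`, together with a body formula. -/
structure CPLaw (A : Type) where
  head : List (A × ℝ)
  body : Form A
  head_ne : head ≠ []
  head_nodup : (head.map Prod.fst).Nodup
  head_pos : ∀ p ∈ head, 0 < p.2 ∧ p.2 ≤ 1
  head_sum : (head.map Prod.snd).sum ≤ 1

namespace CPLaw

variable {A : Type}

/-- `head_At(r)`: the set of atoms occurring in the head of `r`. -/
def headAt (r : CPLaw A) : Set A := {a | a ∈ r.head.map Prod.fst}

/-- The sum `Σᵢ αᵢ` of the probabilities in the head of `r`. -/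
def psum (r : CPLaw A) : ℝ := (r.head.map Prod.snd).sum

end CPLaw

/-- A probabilistic process: a finite rooted tree (given by a parent function with a
depth function ensuring well-foundedness), with an interpretation, an edge probability
and a path probability attached to each node, together with (for use in execution
models) a CP-law index `rule` attached to each node and, for each non-root node, the
`choice` in the head of the rule fired at its parent that it corresponds to
(`none` is the extra child carrying the leftover probability `1 - Σᵢ αᵢ`). -/
structure Proc (A R : Type) where
  Node : Type
  [fintypeNode : Fintype Node]
  root : Node
  parent : Node → Node
  depth : Node → ℕ
  interp : Node → Set A
  prob : Node → ℝ
  pathProb : Node → ℝ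
  rule : Node → R
  choice : Node → Option ℕ
  depth_root : depth root = 0
  depth_parent : ∀ s, s ≠ root → depth s = depth (parent s) + 1
  pathProb_root : pathProb root = 1
  pathProb_parent : ∀ s, s ≠ root → pathProb s = pathProb (parent s) * prob s

attribute [instance] Proc.fintypeNode

namespace Proc

variable {A R : Type} (W : Proc A R)

/-- `s'` is a child of `s`. -/
def isChild (s' s : W.Node) : Prop := s' ≠ W.root ∧ W.parent s' = s

/-- `s` is a leaf. -/
def isLeaf (s : W.Node) : Prop := ∀ s', ¬ W.isChild s' s

/-- `strictAnc a b`: `a` is a strict ancestor of `b`. -/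
def strictAnc (a b : W.Node) : Prop :=
  Relation.TransGen (fun y x => W.isChild y x) b a

end Proc

variable {A R : Type}

/-- `R_E(s)`: the CP-laws that have not fired at any strict ancestor of `s`. -/
def RE (W : Proc A R) (s : W.Node) : Set R :=
  {r | ∀ s', W.strictAnc s' s → W.rule s' ≠ r}

/-- The CP-law `E(s)` fires at the non-leaf node `s`: `s` has exactly one child for
each head element `(Aᵢ, αᵢ)` (with interpretation `I(s) ∪ {Aᵢ}` and edge probability
`αᵢ`), plus exactly one extra child with unchanged interpretation and edge probability
`1 - Σᵢ αᵢ` in case `Σᵢ αᵢ < 1`. -/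
def FiresAt (C : R → CPLaw A) (W : Proc A R) (s : W.Node) : Prop :=
  (∀ s', W.isChild s' s →
     (∀ i, W.choice s' = some i →
        ∃ h : i < (C (W.rule s)).head.length,
          W.interp s' = insert ((C (W.rule s)).head.get ⟨i, h⟩).1 (W.interp s) ∧
          W.prob s' = ((C (W.rule s)).head.get ⟨i, h⟩).2) ∧
     (W.choice s' = none →
        (C (W.rule s)).psum < 1 ∧ W.interp s' = W.interp s ∧
          W.prob s' = 1 - (C (W.rule s)).psum)) ∧
  (∀ s₁ s₂, W.isChild s₁ s → W.isChild s₂ s → W.choice s₁ = W.choice s₂ → s₁ = s₂) ∧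
  (∀ i, i < (C (W.rule s)).head.length → ∃ s', W.isChild s' s ∧ W.choice s' = some i) ∧
  ((C (W.rule s)).psum < 1 → ∃ s', W.isChild s' s ∧ W.choice s' = none)

/-- `⟨W, I, E⟩` is a weak execution model of the CP-theory `C`. -/
def IsWEM (C : R → CPLaw A) (W : Proc A R) : Prop :=
  W.interp W.root = (∅ : Set A) ∧
  (∀ s, s ≠ W.root → 0 ≤ W.prob s ∧ W.prob s ≤ 1) ∧
  (∀ s, ¬ W.isLeaf s →
    (∑ s' ∈ Finset.univ.filter (fun s' => W.isChild s' s), W.prob s') = 1) ∧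
  (∀ s, ¬ W.isLeaf s →
    W.rule s ∈ RE W s ∧ Form.sat (W.interp s) (C (W.rule s)).body ∧ FiresAt C W s) ∧
  (∀ l, W.isLeaf l → ∀ r ∈ RE W l, ¬ Form.sat (W.interp l) (C r).body)

/-- `ν 0, …, ν n` is a hypothetical derivation sequence at node `s`. -/
def IsHDS (C : R → CPLaw A) (W : Proc A R) (s : W.Node)
    (ν : ℕ → A → TV) (n : ℕ) : Prop :=
  (∀ a, ν 0 a = if a ∈ W.interp s then TV.t else TV.f) ∧
  ∀ i, i < n → ∃ r ∈ RE W s,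
    Form.val (ν i) (C r).body ≠ TV.f ∧
    (∀ p ∈ (C r).headAt, ν i p = TV.f → ν (i+1) p = TV.u) ∧
    (∀ p, ¬ (p ∈ (C r).headAt ∧ ν i p = TV.f) → ν (i+1) p = ν i p)

/-- The hypothetical derivation sequence `ν 0, …, ν n` at `s` is terminal. -/
def HDSTerminal (C : R → CPLaw A) (W : Proc A R) (s : W.Node)
    (ν : ℕ → A → TV) (n : ℕ) : Prop :=
  ¬ ∃ r ∈ RE W s, Form.val (ν n) (C r).body ≠ TV.f ∧
      ∃ p ∈ (C r).headAt, ν n p = TV.f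

/-- `⟨W, I, E⟩` is an execution model of `C`: a weak execution model in which, at every
non-leaf node, the body of the fired CP-law is not unknown in the potential of the
node (the common limit of all terminal hypothetical derivation sequences). -/
def IsExec (C : R → CPLaw A) (W : Proc A R) : Prop :=
  IsWEM C W ∧
  ∀ s, ¬ W.isLeaf s → ∀ ν n, IsHDS C W s ν n → HDSTerminal C W s ν n →
    Form.val (ν n) (C (W.rule s)).body ≠ TV.u

/-- `π_T`: the probability distribution on interpretations induced by a process. -/
def piT (W : Proc A R) (J : Set A) : ℝ :=
  ∑ l ∈ Finset.univ.filter (fun l => W.isLeaf l ∧ W.interp l = J), W.pathProb l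

/-- A `C`-selection: for each CP-law occurrence, either a head element (`some i`)
or the distinguished `∅` outcome (`none`), which carries probability `1 - Σᵢ αᵢ`. -/
abbrev Sel (C : R → CPLaw A) : Type := (r : R) → Option (Fin (C r).head.length)

/-- The probability `σ^α(r)` of the outcome selected for `r` by `σ`. -/
def selWeight (C : R → CPLaw A) (σ : Sel C) (r : R) : ℝ :=
  match σ r with
  | some i => ((C r).head.get i).2
  | none => 1 - (C r).psum

/-- The probability `P(σ) = Π_{r ∈ C} σ^α(r)` of a `C`-selection. -/
def selProb [Fintype R] (C : R → CPLaw A) (σ : Sel C) : ℝ :=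
  ∏ r, selWeight C σ r

/-- `σ` extends the partial selection `σ(s)` determined by the path from the root
to `s`: for every strict ancestor `s'` of `s`, `σ` assigns to the rule fired at `s'`
the head element corresponding to the child of `s'` lying on the path to `s`. -/
def ExtendsPathSel (C : R → CPLaw A) (W : Proc A R) (σ : Sel C) (s : W.Node) : Prop :=
  ∀ s' s'', W.strictAnc s' s → W.isChild s'' s' → (s'' = s ∨ W.strictAnc s'' s) →
    (σ (W.rule s')).map Fin.val = W.choice s''

/-- `ν` updated to map `p` to true. -/
def updT {A : Type} (ν : A → TV) (p : A) : A → TV :=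
  fun a => if a = p then TV.t else ν a

/-- One step of a well-founded induction for the logic program `P` (a family of
rules, each a pair of a head atom and a body formula): either make the head of a
rule with true body true, or make an unfounded set false. -/
def WFStep {A Q : Type} (P : Q → A × Form A) (ν ν' : A → TV) : Prop :=
  (∃ q, Form.val ν (P q).2 = TV.t ∧ ν' = updT ν (P q).1) ∨
  (∃ U : Set A, (∀ p ∈ U, ν p = TV.u) ∧
    (∀ p, ν' p = if p ∈ U then TV.f else ν p) ∧
    (∀ q, (P q).1 ∈ U → Form.val ν' (P q).2 = TV.f))

/-- `ν 0, …, ν m` is a well-founded induction of the logic program `P`. -/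
def IsWFI {A Q : Type} (P : Q → A × Form A) (ν : ℕ → A → TV) (m : ℕ) : Prop :=
  (∀ a, ν 0 a = TV.u) ∧ ∀ j, j < m → WFStep P (ν j) (ν (j+1))

/-- The well-founded induction with limit `ν m` is terminal: no further step yields a
strictly more precise interpretation. -/
def WFITerminal {A Q : Type} (P : Q → A × Form A) (ν : ℕ → A → TV) (m : ℕ) : Prop :=
  ∀ ν', WFStep P (ν m) ν' → leP (ν m) ν' → ν' = ν m

/-- The instance `C^σ`: the logic program consisting of the rules
`σ^h(r) ← body(r)` for all `r` with `σ^h(r) ≠ ∅`. -/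
def instProg (C : R → CPLaw A) (σ : Sel C) :
    {r : R // (σ r).isSome} → A × Form A :=
  fun q => (((C q.1).head.get ((σ q.1).get q.2)).1, (C q.1).body)

/-- The logic program `P` has an exact well-founded model equal to `J`: some terminal
well-founded induction of `P` has as its limit the total interpretation corresponding
to `J`. -/
def LimitIs {A Q : Type} (P : Q → A × Form A) (J : Set A) : Prop :=
  ∃ ν m, IsWFI P ν m ∧ WFITerminal P ν m ∧
    ∀ a, ν m a = if a ∈ J then TV.t else TV.f

/-- The instance based semantics `μ_C`. -/
def muC [Fintype R] (C : R → CPLaw A) (J : Set A) : ℝ :=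
  ∑ σ ∈ Finset.univ.filter (fun σ : Sel C => LimitIs (instProg C σ) J),
    selProb C σ

namespace TV

instance : Fintype TV := ⟨{f, u, t}, by intro a; cases a <;> simp⟩

instance : DecidableRel lep := fun a b => inferInstanceAs (Decidable (a = u ∨ a = b))

lemma lep_refl (a : TV) : lep a a := Or.inr rfl

lemma u_lep (a : TV) : lep u a := Or.inl rfl

lemma lep_antisymm : ∀ {a b : TV}, lep a b → lep b a → a = b := by decide

lemma lep_trans : ∀ {a b c : TV}, lep a b → lep b c → lep a c := by decide

lemma t_lep_iff : ∀ {a : TV}, lep t a ↔ a = t := by decide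

lemma f_lep_iff : ∀ {a : TV}, lep f a ↔ a = f := by decide

lemma lep_t_iff : ∀ {a : TV}, lep a t ↔ a ≠ f := by decide

lemma lep_f_iff : ∀ {a : TV}, lep a f ↔ a ≠ t := by decide

lemma tmin_lep_tmin : ∀ {a b c d : TV}, lep a b → lep c d → lep (tmin a c) (tmin b d) := by
  decide

lemma tmax_lep_tmax : ∀ {a b c d : TV}, lep a b → lep c d → lep (tmax a c) (tmax b d) := by
  decide

lemma tneg_lep_tneg : ∀ {a b : TV}, lep a b → lep (tneg a) (tneg b) := by decide

end TV

section WellFoundedInduction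

variable {A Q : Type}

lemma leP_refl (ν : A → TV) : leP ν ν := fun a => TV.lep_refl (ν a)

lemma leP_trans {ν₁ ν₂ ν₃ : A → TV} (h₁₂ : leP ν₁ ν₂) (h₂₃ : leP ν₂ ν₃) : leP ν₁ ν₃ :=
  fun a => TV.lep_trans (h₁₂ a) (h₂₃ a)

lemma Form.val_lep_val {ν ν' : A → TV} (h : leP ν ν') :
    ∀ φ : Form A, TV.lep (Form.val ν φ) (Form.val ν' φ)
  | .atom a => h a
  | .conj φ ψ => TV.tmin_lep_tmin (val_lep_val h φ) (val_lep_val h ψ)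
  | .disj φ ψ => TV.tmax_lep_tmax (val_lep_val h φ) (val_lep_val h ψ)
  | .neg φ => TV.tneg_lep_tneg (val_lep_val h φ)

lemma Form.val_eq_t_of_leP {ν ν' : A → TV} (h : leP ν ν') {φ : Form A}
    (hφ : Form.val ν φ = TV.t) : Form.val ν' φ = TV.t :=
  TV.t_lep_iff.1 (hφ ▸ val_lep_val h φ)

lemma Form.val_eq_f_of_leP {ν ν' : A → TV} (h : leP ν ν') {φ : Form A}
    (hφ : Form.val ν φ = TV.f) : Form.val ν' φ = TV.f :=
  TV.f_lep_iff.1 (hφ ▸ val_lep_val h φ)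

/-- `ν[U:f]`. -/
def updF (ν : A → TV) (U : Set A) : A → TV :=
  fun a => if a ∈ U then TV.f else ν a

lemma updT_leP_updT {ν ν' : A → TV} (h : leP ν ν') (p : A) : leP (updT ν p) (updT ν' p) := by
  intro a
  unfold updT
  split_ifs
  exacts [TV.lep_refl _, h a]

lemma updF_leP_updF {ν ν' : A → TV} (h : leP ν ν') (U : Set A) :
    leP (updF ν U) (updF ν' U) := by
  intro a
  unfold updF
  split_ifs
  exacts [TV.lep_refl _, h a]

def Unfounded (P : Q → A × Form A) (ν : A → TV) (U : Set A) : Prop :=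
  ∀ q, (P q).1 ∈ U → Form.val (updF ν U) (P q).2 = TV.f

lemma Unfounded.of_leP {P : Q → A × Form A} {ν ν' : A → TV} {U : Set A}
    (hU : Unfounded P ν U) (h : leP ν ν') : Unfounded P ν' U :=
  fun q hq => Form.val_eq_f_of_leP (updF_leP_updF h U) (hU q hq)

lemma wfStep_iff {P : Q → A × Form A} {ν ν' : A → TV} :
    WFStep P ν ν' ↔ (∃ q, Form.val ν (P q).2 = TV.t ∧ ν' = updT ν (P q).1) ∨
      ∃ U, (∀ p ∈ U, ν p = TV.u) ∧ ν' = updF ν U ∧ Unfounded P ν U := by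
  refine or_congr Iff.rfl (exists_congr fun U => and_congr Iff.rfl ?_)
  constructor
  · rintro ⟨hν', hU⟩
    obtain rfl : ν' = updF ν U := funext hν'
    exact ⟨rfl, hU⟩
  · rintro ⟨rfl, hU⟩
    exact ⟨fun _ => rfl, hU⟩

def FalseHeadsFalseBodies (P : Q → A × Form A) (ν : A → TV) : Prop :=
  ∀ q, ν (P q).1 = TV.f → Form.val ν (P q).2 = TV.f

variable {P : Q → A × Form A}

lemma FalseHeadsFalseBodies.head_ne_f {ν : A → TV} (hI : FalseHeadsFalseBodies P ν) {q : Q}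
    (hq : Form.val ν (P q).2 = TV.t) : ν (P q).1 ≠ TV.f := fun hf => by
  simpa [hq] using hI q hf

lemma FalseHeadsFalseBodies.leP_updT {ν : A → TV} (hI : FalseHeadsFalseBodies P ν) {q : Q}
    (hq : Form.val ν (P q).2 = TV.t) : leP ν (updT ν (P q).1) := by
  intro a
  unfold updT
  split_ifs with ha
  · exact TV.lep_t_iff.2 (ha ▸ hI.head_ne_f hq)
  · exact TV.lep_refl _

lemma leP_updF {ν : A → TV} {U : Set A} (hU : ∀ p ∈ U, ν p = TV.u) : leP ν (updF ν U) := by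
  intro a
  unfold updF
  split_ifs with ha
  · exact hU a ha ▸ TV.u_lep _
  · exact TV.lep_refl _

lemma WFStep.leP {ν ν' : A → TV} (hI : FalseHeadsFalseBodies P ν) (h : WFStep P ν ν') :
    leP ν ν' := by
  rcases wfStep_iff.1 h with ⟨q, hq, rfl⟩ | ⟨U, hU, rfl, -⟩
  exacts [hI.leP_updT hq, leP_updF hU]

lemma WFStep.falseHeadsFalseBodies {ν ν' : A → TV} (hI : FalseHeadsFalseBodies P ν)
    (h : WFStep P ν ν') : FalseHeadsFalseBodies P ν' := by
  have hle := h.leP hI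
  intro q hf
  rcases wfStep_iff.1 h with ⟨q', -, rfl⟩ | ⟨U, -, rfl, hU⟩
  · have hne : (P q).1 ≠ (P q').1 := fun e => by simp [updT, e] at hf
    simp only [updT, if_neg hne] at hf
    exact Form.val_eq_f_of_leP hle (hI q hf)
  · by_cases hq : (P q).1 ∈ U
    · exact hU q hq
    · simp only [updF, if_neg hq] at hf
      exact Form.val_eq_f_of_leP hle (hI q hf)

lemma IsWFI.falseHeadsFalseBodies {ν : ℕ → A → TV} {m : ℕ} (h : IsWFI P ν m) :
    ∀ j ≤ m, FalseHeadsFalseBodies P (ν j)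
  | 0, _ => fun q hf => by simp [h.1] at hf
  | j + 1, hj => (h.2 j hj).falseHeadsFalseBodies (h.falseHeadsFalseBodies j (by omega))

lemma IsWFI.leP_of_le {ν : ℕ → A → TV} {m : ℕ} (h : IsWFI P ν m) {i j : ℕ} (hij : i ≤ j)
    (hjm : j ≤ m) : leP (ν i) (ν j) := by
  induction j, hij using Nat.le_induction with
  | base => exact leP_refl _
  | succ j hij ih =>
    exact leP_trans (ih (by omega))
      ((h.2 j hjm).leP (h.falseHeadsFalseBodies j (by omega)))

-- A rule fired along the way has a true body below `ν m[U:f]`, so its head is outside `U`.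
lemma IsWFI.leP_updF_of_unfounded {ν : ℕ → A → TV} {m : ℕ} (h : IsWFI P ν m) {U : Set A}
    (hU : Unfounded P (ν m) U) : ∀ i ≤ m, leP (ν i) (updF (ν m) U)
  | 0, _ => fun a => h.1 a ▸ TV.u_lep _
  | i + 1, hi => by
    have ih := h.leP_updF_of_unfounded hU i (by omega)
    intro a
    by_cases ha : a ∈ U
    · simp only [updF, if_pos ha, TV.lep_f_iff]
      rcases wfStep_iff.1 (h.2 i hi) with ⟨q, hq, hstep⟩ | ⟨U', -, hstep, -⟩
      · have hqU : (P q).1 ∉ U := fun hqU => by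
          simpa [hU q hqU] using Form.val_eq_t_of_leP ih hq
        have hne : a ≠ (P q).1 := fun e => hqU (e ▸ ha)
        simpa [hstep, updT, hne, updF, ha, TV.lep_f_iff] using ih a
      · by_cases ha' : a ∈ U'
        · simp [hstep, updF, ha']
        · simpa [hstep, updF, ha', ha, TV.lep_f_iff] using ih a
    · simpa [updF, ha] using h.leP_of_le hi le_rfl a

lemma WFITerminal.updF_eq_of_unfounded {ν : ℕ → A → TV} {m : ℕ} (h : IsWFI P ν m)
    (hterm : WFITerminal P ν m) {U : Set A} (hU : Unfounded P (ν m) U) :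
    updF (ν m) U = ν m := by
  have hle : leP (ν m) (updF (ν m) U) := h.leP_updF_of_unfounded hU m le_rfl
  -- the atoms of `U` not yet false form an unfounded set with the same effect
  set U' := {a | a ∈ U ∧ ν m a = TV.u}
  have hU' : updF (ν m) U' = updF (ν m) U := by
    funext a
    by_cases ha : a ∈ U
    · have : ν m a ≠ TV.t := by simpa [updF, ha, TV.lep_f_iff] using hle a
      cases hν : ν m a <;> simp_all [U', updF]
    · simp [U', updF, ha]
  have hstep : WFStep P (ν m) (updF (ν m) U') :=
    wfStep_iff.2 (Or.inr ⟨U', fun _ ha => ha.2, rfl, fun q hq => hU' ▸ hU q hq.1⟩)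
  rw [← hU']
  exact hterm _ hstep (hU' ▸ hle)

lemma WFITerminal.updT_eq_of_body_eq_t {ν : ℕ → A → TV} {m : ℕ} (h : IsWFI P ν m)
    (hterm : WFITerminal P ν m) {q : Q} (hq : Form.val (ν m) (P q).2 = TV.t) :
    updT (ν m) (P q).1 = ν m :=
  hterm _ (Or.inl ⟨q, hq, rfl⟩) ((h.falseHeadsFalseBodies m le_rfl).leP_updT hq)

lemma WFITerminal.leP_limit {ν : ℕ → A → TV} {m : ℕ} (h : IsWFI P ν m)
    (hterm : WFITerminal P ν m) {μ : ℕ → A → TV} {k : ℕ} (hμ : IsWFI P μ k) :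
    ∀ j ≤ k, leP (μ j) (ν m)
  | 0, _ => fun a => hμ.1 a ▸ TV.u_lep _
  | j + 1, hj => by
    have ih := hterm.leP_limit h hμ j (by omega)
    rcases wfStep_iff.1 (hμ.2 j hj) with ⟨q, hq, hstep⟩ | ⟨U, -, hstep, hU⟩
    · rw [hstep, ← hterm.updT_eq_of_body_eq_t h (Form.val_eq_t_of_leP ih hq)]
      exact updT_leP_updT ih _
    · rw [hstep, ← hterm.updF_eq_of_unfounded h (hU.of_leP ih)]
      exact updF_leP_updF ih U

end WellFoundedInduction

theorem wfi_confluence_general {A Q : Type}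
    (P : Q → A × Form A)
    (ν : ℕ → A → TV) (m : ℕ) (μ : ℕ → A → TV) (k : ℕ)
    (h₁ : IsWFI P ν m) (h₂ : WFITerminal P ν m)
    (h₃ : IsWFI P μ k) (h₄ : WFITerminal P μ k) :
    ν m = μ k :=
  funext fun a => TV.lep_antisymm (h₄.leP_limit h₃ h₁ m le_rfl a) (h₂.leP_limit h₁ h₃ k le_rfl a)

/-- Confluence of terminal well-founded inductions: any two terminal well-founded
inductions of a logic program have the same limit. -/
theorem wfi_confluence {A Q : Type} [Fintype A] [Fintype Q]
    (P : Q → A × Form A)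
    (ν : ℕ → A → TV) (m : ℕ) (μ : ℕ → A → TV) (k : ℕ)
    (h₁ : IsWFI P ν m) (h₂ : WFITerminal P ν m)
    (h₃ : IsWFI P μ k) (h₄ : WFITerminal P μ k) :
    ν m = μ k :=
  wfi_confluence_general P ν m μ k h₁ h₂ h₃ h₄

end CP
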